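/- Fix ψ > 0 and define the spherical taper t_ψ : [0, ∞) → ℝ by t_ψ(h) = (1 - h/ψ)² (1 + h/(2ψ)) for 0 ≤ h < ψ and t_ψ(h) = 0 for h ≥ ψ. Then t_ψ is positive definite in ℝ³: for every n ∈ ℕ, every choice of points s₁, …, s_n ∈ ℝ³, and every a₁, …, a_n ∈ ℝ, one has ∑_{i=1}^n ∑_{j=1}^n a_i a_j t_ψ(‖s_i − s_j‖) ≥ 0. -/

import Mathlib

/-!
Let `B(s, ψ/2)` be the ball of radius `ψ/2` about `s`. The volume of the lens
`B(u, ψ/2) ∩ B(v, ψ/2)` is `π ψ³/6 · t_ψ(‖u - v‖)`; it is found by moving the centres to `0` and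
`d e₀` with an isometry and integrating the areas of the discs cut out by the planes `x₀ = t`.
This volume is the `L²` inner product of the indicators of the two balls, so
`∑ᵢ ∑ⱼ aᵢ aⱼ t_ψ(‖sᵢ - sⱼ‖)` is a positive multiple of `‖∑ᵢ aᵢ 𝟙_{B(sᵢ, ψ/2)}‖² ≥ 0`.
-/

open Real

noncomputable def sphericalTaper (ψ : ℝ) (h : ℝ) : ℝ :=
  if h < ψ then (1 - h / ψ) ^ 2 * (1 + h / (2 * ψ)) else 0

open MeasureTheory Metric

theorem sum_sum_mul_inner_nonneg {ι E : Type*} [Fintype ι] [NormedAddCommGroup E]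
    [InnerProductSpace ℝ E] (v : ι → E) (a : ι → ℝ) :
    0 ≤ ∑ i, ∑ j, a i * a j * inner ℝ (v i) (v j) := by
  convert real_inner_self_nonneg (x := ∑ i, a i • v i) using 1
  simp only [sum_inner, inner_sum, real_inner_smul_left, real_inner_smul_right]
  exact Finset.sum_congr rfl fun i _ ↦ Finset.sum_congr rfl fun j _ ↦ by
    rw [real_inner_comm, mul_assoc]

theorem sum_sum_mul_measureReal_inter_nonneg {ι α : Type*} [Fintype ι] [MeasurableSpace α]
    (μ : Measure α) {s : ι → Set α} (hs : ∀ i, MeasurableSet (s i)) (hμs : ∀ i, μ (s i) ≠ ⊤)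
    (a : ι → ℝ) : 0 ≤ ∑ i, ∑ j, a i * a j * μ.real (s i ∩ s j) := by
  simpa only [L2.real_inner_indicatorConstLp_one_indicatorConstLp_one] using
    sum_sum_mul_inner_nonneg (fun i ↦ indicatorConstLp 2 (hs i) (hμs i) (1 : ℝ)) a

theorem volume_ball_inter_ball_eq_of_norm_sub_eq {E : Type*} [NormedAddCommGroup E]
    [InnerProductSpace ℝ E] [FiniteDimensional ℝ E] [MeasurableSpace E] [BorelSpace E]
    {u v w : E} (h : ‖u - v‖ = ‖w‖) (r : ℝ) :
    volume (ball u r ∩ ball v r) = volume (ball 0 r ∩ ball w r) := by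
  set f := Submodule.reflection (ℝ ∙ (v - u - w))ᗮ
  have hfw : f (v - u) = w := Submodule.reflection_sub (by rw [norm_sub_rev, h])
  have hpre : (f ∘ (· - u)) ⁻¹' (ball 0 r ∩ ball w r) = ball u r ∩ ball v r := by
    ext x
    simp only [Set.preimage_inter, Set.mem_inter_iff, Set.mem_preimage, Function.comp_apply,
      mem_ball_iff_norm, sub_zero, ← hfw, ← map_sub, f.norm_map, sub_sub_sub_cancel_right]
  rw [← hpre, (f.measurePreserving.comp (measurePreserving_sub_right volume u)).measure_preimage
    (measurableSet_ball.inter measurableSet_ball).nullMeasurableSet]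

theorem volume_setOf_sq_add_sq_lt (c : ℝ) :
    volume {y : Fin 2 → ℝ | y 0 ^ 2 + y 1 ^ 2 < c} = ENNReal.ofReal (π * c) := by
  rcases le_or_gt c 0 with hc | hc
  · have : {y : Fin 2 → ℝ | y 0 ^ 2 + y 1 ^ 2 < c} = ∅ :=
      Set.eq_empty_of_forall_notMem fun y hy ↦ hy.not_ge (hc.trans (by positivity))
    rw [this, measure_empty, eq_comm, ENNReal.ofReal_eq_zero]
    exact mul_nonpos_of_nonneg_of_nonpos pi_nonneg hc
  · have : {y : Fin 2 → ℝ | y 0 ^ 2 + y 1 ^ 2 < c} = WithLp.toLp 2 ⁻¹' ball 0 √c := by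
      ext y
      simp [EuclideanSpace.norm_eq, Fin.sum_univ_two,
        sqrt_lt_sqrt_iff (by positivity : 0 ≤ y 0 ^ 2 + y 1 ^ 2)]
    rw [this, (PiLp.volume_preserving_toLp _).measure_preimage measurableSet_ball.nullMeasurableSet,
      EuclideanSpace.volume_ball_fin_two, ← ENNReal.ofReal_pow (sqrt_nonneg c), sq_sqrt hc.le,
      ← ENNReal.ofReal_mul hc.le, mul_comm]

theorem volume_setOf_sq_add_sq_lt_eq_lintegral {g : ℝ → ℝ} (hg : Measurable g) :
    volume {x : Fin 3 → ℝ | x 1 ^ 2 + x 2 ^ 2 < g (x 0)} = ∫⁻ t, ENNReal.ofReal (π * g t) := by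
  set T := {p : ℝ × (Fin 2 → ℝ) | p.2 0 ^ 2 + p.2 1 ^ 2 < g p.1}
  have hT : MeasurableSet T := measurableSet_lt (by fun_prop) (by fun_prop)
  have : {x : Fin 3 → ℝ | x 1 ^ 2 + x 2 ^ 2 < g (x 0)}
      = MeasurableEquiv.piFinSuccAbove (fun _ ↦ ℝ) 0 ⁻¹' T := rfl
  rw [this, (volume_preserving_piFinSuccAbove (fun _ ↦ ℝ) 0).measure_preimage
    hT.nullMeasurableSet, Measure.volume_eq_prod, Measure.prod_apply hT]
  exact lintegral_congr fun t ↦ volume_setOf_sq_add_sq_lt (g t)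

theorem integral_sq_sub_sub_sq (R c p q : ℝ) :
    ∫ t in p..q, (R ^ 2 - (t - c) ^ 2) = R ^ 2 * (q - p) - ((q - c) ^ 3 - (p - c) ^ 3) / 3 := by
  rw [intervalIntegral.integral_sub intervalIntegrable_const
    ((by fun_prop : Continuous fun t : ℝ ↦ (t - c) ^ 2).intervalIntegrable _ _),
    intervalIntegral.integral_comp_sub_right (· ^ 2)]
  norm_num
  ring

theorem lintegral_ofReal_pi_mul_sq_sub_max_sq {r d : ℝ} (hd : 0 ≤ d) (hdr : d ≤ 2 * r) :
    ∫⁻ t, ENNReal.ofReal (π * (r ^ 2 - max (t ^ 2) ((t - d) ^ 2)))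
      = ENNReal.ofReal (π / 12 * (2 * r - d) ^ 2 * (4 * r + d)) := by
  set f : ℝ → ℝ := fun t ↦ π * (r ^ 2 - max (t ^ 2) ((t - d) ^ 2))
  have hf : Continuous f := by fun_prop
  have hsupp : (fun t ↦ ENNReal.ofReal (f t)).support ⊆ Set.Icc (d - r) r := by
    refine Function.support_subset_iff'.2 fun t ht ↦ ENNReal.ofReal_eq_zero.2 ?_
    refine mul_nonpos_of_nonneg_of_nonpos pi_nonneg (sub_nonpos.2 ?_)
    simp only [Set.mem_Icc, not_and_or, not_le] at ht
    rcases ht with ht | ht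
    · exact le_max_of_le_right (by nlinarith)
    · exact le_max_of_le_left (by nlinarith)
  have hnonneg : ∀ t ∈ Set.Icc (d - r) r, 0 ≤ f t := fun t ⟨ht₁, ht₂⟩ ↦
    mul_nonneg pi_nonneg (sub_nonneg.2 (max_le (by nlinarith) (by nlinarith)))
  have hleft : Set.EqOn f (fun t ↦ π * (r ^ 2 - (t - d) ^ 2)) (Set.uIcc (d - r) (d / 2)) := by
    intro t ht
    rw [Set.uIcc_of_le (by linarith), Set.mem_Icc] at ht
    simp only [f, max_eq_right (by nlinarith : t ^ 2 ≤ (t - d) ^ 2)]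
  have hright : Set.EqOn f (fun t ↦ π * (r ^ 2 - (t - 0) ^ 2)) (Set.uIcc (d / 2) r) := by
    intro t ht
    rw [Set.uIcc_of_le (by linarith), Set.mem_Icc] at ht
    simp only [f, sub_zero, max_eq_left (by nlinarith : (t - d) ^ 2 ≤ t ^ 2)]
  rw [← setLIntegral_eq_of_support_subset hsupp, ← ofReal_integral_eq_lintegral_ofReal
    hf.integrableOn_Icc (ae_restrict_of_forall_mem measurableSet_Icc hnonneg),
    integral_Icc_eq_integral_Ioc, ← intervalIntegral.integral_of_le (by linarith),
    ← intervalIntegral.integral_add_adjacent_intervals (b := d / 2) (hf.intervalIntegrable _ _)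
      (hf.intervalIntegrable _ _), intervalIntegral.integral_congr hleft,
    intervalIntegral.integral_congr hright, intervalIntegral.integral_const_mul,
    intervalIntegral.integral_const_mul, integral_sq_sub_sub_sq, integral_sq_sub_sub_sq]
  ring_nf

theorem volume_ball_zero_inter_ball_single {r d : ℝ} (hd : 0 ≤ d) (hdr : d ≤ 2 * r) :
    volume (ball (0 : EuclideanSpace ℝ (Fin 3)) r ∩ ball (EuclideanSpace.single 0 d) r)
      = ENNReal.ofReal (π / 12 * (2 * r - d) ^ 2 * (4 * r + d)) := by
  have hr : 0 ≤ r := by linarith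
  have : ball (0 : EuclideanSpace ℝ (Fin 3)) r ∩ ball (EuclideanSpace.single 0 d) r
      = WithLp.ofLp ⁻¹' {x | x 1 ^ 2 + x 2 ^ 2 < r ^ 2 - max (x 0 ^ 2) ((x 0 - d) ^ 2)} := by
    ext x
    simp only [Set.mem_inter_iff, mem_ball, dist_eq_norm, sub_zero, EuclideanSpace.norm_eq,
      norm_eq_abs, sq_abs, Fin.sum_univ_three, PiLp.sub_apply, PiLp.single_apply, Fin.reduceEq,
      ↓reduceIte, Set.preimage_ofPred_eq, Set.mem_ofPred_eq]
    rw [sqrt_lt (by positivity) hr, sqrt_lt (by positivity) hr, lt_sub_comm, max_lt_iff]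
    constructor <;> rintro ⟨h₁, h₂⟩ <;> constructor <;> linarith
  rw [this, (PiLp.volume_preserving_ofLp _).measure_preimage
    (measurableSet_lt (by fun_prop) (by fun_prop)).nullMeasurableSet,
    volume_setOf_sq_add_sq_lt_eq_lintegral (g := fun t ↦ r ^ 2 - max (t ^ 2) ((t - d) ^ 2))
      (by fun_prop),
    lintegral_ofReal_pi_mul_sq_sub_max_sq hd hdr]

theorem measureReal_ball_inter_ball_eq_mul_sphericalTaper {ψ : ℝ} (hψ : 0 < ψ)
    (u v : EuclideanSpace ℝ (Fin 3)) :
    volume.real (ball u (ψ / 2) ∩ ball v (ψ / 2)) = π * ψ ^ 3 / 6 * sphericalTaper ψ ‖u - v‖ := by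
  set d := ‖u - v‖
  by_cases hdψ : d < ψ
  · have hd : 0 ≤ d := norm_nonneg _
    rw [measureReal_def, volume_ball_inter_ball_eq_of_norm_sub_eq (w := EuclideanSpace.single 0 d)
      (by simp [d]), volume_ball_zero_inter_ball_single hd (by linarith),
      ENNReal.toReal_ofReal (by positivity), sphericalTaper, if_pos hdψ]
    field_simp
    ring
  · have : Disjoint (ball u (ψ / 2)) (ball v (ψ / 2)) :=
      ball_disjoint_ball (by rw [dist_eq_norm]; linarith)
    rw [this.inter_eq, measureReal_empty, sphericalTaper, if_neg hdψ, mul_zero]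

/-- For `ψ > 0`, the spherical taper is positive definite in `ℝ³`: for
every `n`, points `s₁, …, s_n ∈ ℝ³` and reals `a₁, …, a_n`,
`∑ᵢ ∑ⱼ aᵢ aⱼ t_ψ(‖sᵢ − sⱼ‖) ≥ 0`. -/
theorem sphericalTaper_posDef (ψ : ℝ) (hψ : 0 < ψ) (n : ℕ)
    (s : Fin n → EuclideanSpace ℝ (Fin 3)) (a : Fin n → ℝ) :
    0 ≤ ∑ i, ∑ j, a i * a j * sphericalTaper ψ ‖s i - s j‖ := by
  have hgram := sum_sum_mul_measureReal_inter_nonneg volume (s := fun i ↦ ball (s i) (ψ / 2))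
    (fun _ ↦ measurableSet_ball) (fun _ ↦ measure_ball_lt_top.ne) a
  simp only [measureReal_ball_inter_ball_eq_mul_sphericalTaper hψ, mul_left_comm _ (π * ψ ^ 3 / 6),
    ← Finset.mul_sum] at hgram
  exact nonneg_of_mul_nonneg_right hgram (by positivity)
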